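/- arXiv:1712.04930 — 5 statements merged into one kernel-verified Lean document; each statement's English description precedes it below -/
import Mathlib

section
/- Let h > r ≥ 1 be integers, K = C(h,r), K̂ = C(h−1,r−1), and let D ≥ K be the number of files. Let t1, t2 ∈ {0,1,…,K̂} and let a, b be nonnegative integers with 2^(K̂·a + C(K̂,t2)·b) ≥ h, and set F = r·(K̂·a + C(K̂,t2)·b). Then there exists a caching scheme for the combination network: for each relay j a placement function mapping any realization of the D files (each an F-bit string) to a relay-cache string of D·K̂·a bits; for each user U (an r-element subset of the h relays) a placement function mapping the files to a user-cache string of D·r·(t1·a + C(K̂−1,t2−1)·b) bits; for every demand vector d (assigning a file index to each user) a server-to-relay signal X_j of C(K̂,t2+1)·b bits for each relay j, computed from the files and d; for each relay j and each connected user U a relay-to-user signal Y_{j,U} of C(K̂−1,t2)·b + (K̂−t1)·a bits computed only from (X_j, relay j's cache, d); and for each user U a decoding function such that, for every realization of the D files and every demand vector d, user U reconstructs its requested file exactly from its cache content, d, and the r signals {Y_{j,U} : j ∈ U}. (These bit counts correspond to relay memory N·F = D·K̂·a bits, user memory M·F bits with M = (t1−t2)·N·r/K̂ + t2·D/K̂,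 first-hop rate R1 = ((K̂−t2)/(r(t2+1)))·(1 − N·r/D), and second-hop rate R2 = (1/r)(1 − M/D).) -/
/-!
Each file, read as `r` symbols of `GF(2^m)` with `m = K̂a + C(K̂,t₂)b`, is Reed–Solomon encoded
into `h` symbols, one per relay; any `r` of them determine the file, so it suffices that every
user learns, at each of its `r` relays, the symbol of its requested file.

Each relay serves its `K̂` attached users with a two-hop version of the Maddah-Ali–Niesen scheme.
A relay symbol splits into an uncoded part of `K̂a` bits, which the relay caches entirely and of
which every user caches the first `t₁a` bits, and `C(K̂,t₂)` subfiles of `b` bits indexed by the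
`t₂`-sets `T` of attached users, subfile `T` being cached by the users in `T`. For every
`(t₂+1)`-set `S` the server sends the sum (XOR: `Bool` is a Boolean ring) over `v ∈ S` of
subfile `S \ {v}` of the symbol requested by `v`; the relay forwards to each attached user `u`
the sums with `u ∈ S` together with the uncoded bits `u` lacks. In the sum for
`S = insert u T` every term but the one user `u` wants is indexed by a set containing `u`, hence
cached by `u`.
-/

open Finset Polynomial

section Bits

variable {α : Type*} [Fintype α] {N : ℕ}

noncomputable def toBits (f : α → Bool) (x : Fin N) : Bool :=
  if hx : (x : ℕ) < Fintype.card α then f ((Fintype.equivFin α).symm ⟨x, hx⟩) else false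

noncomputable def ofBits (g : Fin N → Bool) (y : α) : Bool :=
  if hy : (Fintype.equivFin α y : ℕ) < N then g ⟨_, hy⟩ else false

theorem ofBits_toBits (hN : Fintype.card α ≤ N) (f : α → Bool) :
    ofBits (toBits (N := N) f) = f := by
  funext y
  have hy : (Fintype.equivFin α y : ℕ) < N := (Fintype.equivFin α y).isLt.trans_le hN
  simp [ofBits, toBits, hy]

theorem toBits_ofBits (hN : N ≤ Fintype.card α) (g : Fin N → Bool) :
    toBits (ofBits (α := α) g) = g := by
  funext x
  have hx : (x : ℕ) < Fintype.card α := x.isLt.trans_le hN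
  simp [ofBits, toBits, hx]

end Bits

section SubsetsContaining

variable {α : Type*} [Fintype α] [DecidableEq α]

theorem Fintype.card_finset_len_succ_and_mem (u : α) (k : ℕ) :
    Fintype.card {T : Finset α // T.card = k + 1 ∧ u ∈ T} = (Fintype.card α - 1).choose k := by
  have e : {T : Finset α // T.card = k + 1 ∧ u ∈ T} ≃
      {T : Finset α // T ∈ (univ.erase u).powersetCard k} :=
    { toFun := fun T => ⟨T.1.erase u, mem_powersetCard.2
        ⟨erase_subset_erase u (subset_univ _), by rw [card_erase_of_mem T.2.2, T.2.1]; rfl⟩⟩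
      invFun := fun T =>
        have hu : u ∉ T.1 := fun hu => (mem_erase.1 ((mem_powersetCard.1 T.2).1 hu)).1 rfl
        ⟨insert u T.1, by rw [card_insert_of_notMem hu, (mem_powersetCard.1 T.2).2],
          mem_insert_self u T.1⟩
      left_inv := fun T => Subtype.ext (insert_erase T.2.2)
      right_inv := fun T => Subtype.ext (erase_insert
        fun hu => (mem_erase.1 ((mem_powersetCard.1 T.2).1 hu)).1 rfl) }
  rw [Fintype.card_congr e, Fintype.card_coe, card_powersetCard, card_erase_of_mem (mem_univ u),
    card_univ]

theorem Fintype.card_finset_len_and_mem_le (u : α) (k : ℕ) :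
    Fintype.card {T : Finset α // T.card = k ∧ u ∈ T} ≤ (Fintype.card α - 1).choose (k - 1) := by
  cases k with
  | zero =>
    have : IsEmpty {T : Finset α // T.card = 0 ∧ u ∈ T} := ⟨fun ⟨T, hT, hu⟩ => by simp_all⟩
    rw [Fintype.card_eq_zero]
    exact Nat.zero_le _
  | succ k => exact (Fintype.card_finset_len_succ_and_mem u k).le

end SubsetsContaining

section ReedSolomon

variable {K ι : Type*} [Field K] {r : ℕ}

noncomputable def rsEncode (pts : ι ↪ K) (c : Fin r → K) (j : ι) : K :=
  ((degreeLTEquiv K r).symm c : K[X]).eval (pts j)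

noncomputable def rsDecode [DecidableEq ι] (pts : ι ↪ K) (U : Finset ι) (v : ι → K) :
    Fin r → K :=
  fun k => (Lagrange.interpolate U pts v).coeff k

theorem rsDecode_eq_of_eqOn [DecidableEq ι] (pts : ι ↪ K) {U : Finset ι} (hU : U.card = r)
    {c : Fin r → K} {v : ι → K} (hv : ∀ j ∈ U, v j = rsEncode pts c j) :
    rsDecode pts U v = c := by
  set p := (degreeLTEquiv K r).symm c
  have hp : (p : K[X]) = Lagrange.interpolate U pts v :=
    Lagrange.eq_interpolate_of_eval_eq v pts.injective.injOn
      (by rw [hU]; exact mem_degreeLT.1 p.2) fun j hj => (hv j hj).symm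
  funext k
  rw [rsDecode, ← hp]
  exact congrFun ((degreeLTEquiv K r).apply_symm_apply c) k

end ReedSolomon

namespace TwoHop

/-- Users cache the uncoded bits `P`, the relay forwards `Q`; subfiles are indexed by the
`t`-subsets of the attached users `L`. -/
abbrev Position (L P Q β : Type*) (t : ℕ) := (P ⊕ Q) ⊕ ({T : Finset L // T.card = t} × β)

variable {ι L P Q β : Type*} [DecidableEq L] {t : ℕ}

def subfile (s : Position L P Q β t → Bool) (T : Finset L) (x : β) : Bool :=
  if hT : T.card = t then s (.inr (⟨T, hT⟩, x)) else false

def relayCache (s : ι → Position L P Q β t → Bool) : ι × (P ⊕ Q) → Bool :=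
  fun p => s p.1 (.inl p.2)

def userCache (s : ι → Position L P Q β t → Bool) (u : L) :
    ι × (P ⊕ {T : Finset L // T.card = t ∧ u ∈ T} × β) → Bool
  | (i, .inl p) => s i (.inl (.inl p))
  | (i, .inr (T, x)) => s i (.inr (⟨T.1, T.2.1⟩, x))

def serverMsg (s : ι → Position L P Q β t → Bool) (dm : L → ι) :
    {S : Finset L // S.card = t + 1} × β → Bool :=
  fun p => ∑ v ∈ p.1.1, subfile (s (dm v)) (p.1.1.erase v) p.2

def relayMsg (xs : {S : Finset L // S.card = t + 1} × β → Bool) (c : ι × (P ⊕ Q) → Bool)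
    (dm : L → ι) (u : L) : ({S : Finset L // S.card = t + 1 ∧ u ∈ S} × β) ⊕ Q → Bool
  | .inl (S, x) => xs (⟨S.1, S.2.1⟩, x)
  | .inr q => c (dm u, .inr q)

def cachedSubfile {u : L} (c : ι × (P ⊕ {T : Finset L // T.card = t ∧ u ∈ T} × β) → Bool)
    (i : ι) (T : Finset L) (x : β) : Bool :=
  if hT : T.card = t ∧ u ∈ T then c (i, .inr (⟨T, hT⟩, x)) else false

def decode (u : L) (c : ι × (P ⊕ {T : Finset L // T.card = t ∧ u ∈ T} × β) → Bool)
    (y : ({S : Finset L // S.card = t + 1 ∧ u ∈ S} × β) ⊕ Q → Bool) (dm : L → ι) :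
    Position L P Q β t → Bool
  | .inl (.inl p) => c (dm u, .inl p)
  | .inl (.inr q) => y (.inr q)
  | .inr (T, x) =>
    if hu : u ∈ T.1 then c (dm u, .inr (⟨T.1, T.2, hu⟩, x))
    else
      y (.inl (⟨insert u T.1, by rw [card_insert_of_notMem hu, T.2], mem_insert_self u T.1⟩, x)) -
        ∑ v ∈ T.1, cachedSubfile c (dm v) ((insert u T.1).erase v) x

theorem cachedSubfile_userCache (s : ι → Position L P Q β t → Bool) {u : L} {T : Finset L}
    (hu : u ∈ T) (i : ι) (x : β) : cachedSubfile (userCache s u) i T x = subfile (s i) T x := by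
  by_cases hT : T.card = t
  · simp [cachedSubfile, subfile, hT, hu, userCache]
  · simp [cachedSubfile, subfile, hT]

theorem decode_userCache_relayMsg (s : ι → Position L P Q β t → Bool) (dm : L → ι) (u : L) :
    decode u (userCache s u) (relayMsg (serverMsg s dm) (relayCache s) dm u) dm = s (dm u) := by
  funext pos
  rcases pos with (p | q) | ⟨T, x⟩
  · rfl
  · rfl
  by_cases hu : u ∈ T.1
  · simp [decode, hu, userCache]
  have hcached : ∀ v ∈ T.1, cachedSubfile (userCache s u) (dm v) ((insert u T.1).erase v) x =
      subfile (s (dm v)) ((insert u T.1).erase v) x := fun v hv =>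
    cachedSubfile_userCache s (mem_erase.2 ⟨by rintro rfl; exact hu hv, mem_insert_self u T.1⟩) _ x
  simp only [decode, hu, dite_false, relayMsg, serverMsg, sum_congr rfl hcached,
    sum_insert hu, erase_insert hu, add_sub_cancel_right, subfile, T.2, dite_true]

end TwoHop

namespace CombinationNetwork

abbrev User (h r : ℕ) := {U : Finset (Fin h) // U.card = r}

abbrev Attached {h : ℕ} (r : ℕ) (j : Fin h) := {U : User h r // j ∈ U.1}

theorem card_attached {h r : ℕ} (hr : 1 ≤ r) (j : Fin h) :
    Fintype.card (Attached r j) = (h - 1).choose (r - 1) := by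
  obtain ⟨k, rfl⟩ := Nat.exists_eq_add_of_le' hr
  rw [Fintype.card_congr (Equiv.subtypeSubtypeEquivSubtypeInter _ (j ∈ ·)),
    Fintype.card_finset_len_succ_and_mem, Fintype.card_fin, Nat.add_sub_cancel]

abbrev RelayPosition {h : ℕ} (r n t1 t2 a b : ℕ) (j : Fin h) :=
  TwoHop.Position (Attached r j) (Fin (t1 * a)) (Fin ((n - t1) * a)) (Fin b) t2

variable {h r D F m : ℕ} {K : Type*} [Field K]
  (pts : Fin h ↪ K) (fileSymbols : (Fin F → Bool) ≃ (Fin r → K)) (symbolBits : K ≃ (Fin m → Bool))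
  (n t1 t2 a b : ℕ)

noncomputable def relaySymbols (w : Fin D → Fin F → Bool) (j : Fin h) (i : Fin D) :
    RelayPosition r n t1 t2 a b j → Bool :=
  ofBits (symbolBits (rsEncode pts (fileSymbols (w i)) j))

def localDemand (d : User h r → Fin D) (j : Fin h) (u : Attached r j) : Fin D := d u.1

noncomputable def relayPlace (j : Fin h) (w : Fin D → Fin F → Bool) : Fin (D * n * a) → Bool :=
  toBits (TwoHop.relayCache (relaySymbols pts fileSymbols symbolBits n t1 t2 a b w j))

noncomputable def userPlace (U : User h r) (w : Fin D → Fin F → Bool) :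
    Fin (D * r * (t1 * a + (n - 1).choose (t2 - 1) * b)) → Bool :=
  toBits <| Function.uncurry fun j : {j // j ∈ U.1} =>
    (toBits (TwoHop.userCache (relaySymbols pts fileSymbols symbolBits n t1 t2 a b w j.1)
      ⟨U, j.2⟩) : Fin (D * (t1 * a + (n - 1).choose (t2 - 1) * b)) → Bool)

noncomputable def serverSignal (j : Fin h) (w : Fin D → Fin F → Bool) (d : User h r → Fin D) :
    Fin (n.choose (t2 + 1) * b) → Bool :=
  toBits (TwoHop.serverMsg (relaySymbols pts fileSymbols symbolBits n t1 t2 a b w j)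
    (localDemand d j))

noncomputable def relaySignal (j : Fin h) (U : User h r) (x : Fin (n.choose (t2 + 1) * b) → Bool)
    (c : Fin (D * n * a) → Bool) (d : User h r → Fin D) :
    Fin ((n - 1).choose t2 * b + (n - t1) * a) → Bool :=
  if hj : j ∈ U.1 then
    toBits (TwoHop.relayMsg (P := Fin (t1 * a)) (Q := Fin ((n - t1) * a)) (β := Fin b) (t := t2)
      (ofBits x) (ofBits c) (localDemand d j) (⟨U, hj⟩ : Attached r j))
  else fun _ => false

noncomputable def decodeUser (U : User h r)
    (cache : Fin (D * r * (t1 * a + (n - 1).choose (t2 - 1) * b)) → Bool) (d : User h r → Fin D)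
    (y : (j : Fin h) → j ∈ U.1 → Fin ((n - 1).choose t2 * b + (n - t1) * a) → Bool) :
    Fin F → Bool :=
  fileSymbols.symm <| rsDecode pts U.1 fun j =>
    if hj : j ∈ U.1 then
      let blocks : {j // j ∈ U.1} × Fin (D * (t1 * a + (n - 1).choose (t2 - 1) * b)) → Bool :=
        ofBits cache
      symbolBits.symm <| toBits (TwoHop.decode (P := Fin (t1 * a)) (Q := Fin ((n - t1) * a))
        (β := Fin b) (t := t2) (⟨U, hj⟩ : Attached r j) (ofBits (Function.curry blocks ⟨j, hj⟩))
        (ofBits (y j hj)) (localDemand d j))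
    else 0

variable {n t1 t2 a b}

theorem decodeUser_userPlace (hL : ∀ j : Fin h, Fintype.card (Attached r j) = n)
    (ht1 : t1 ≤ n) (hm : m ≤ n * a + n.choose t2 * b) (w : Fin D → Fin F → Bool)
    (d : User h r → Fin D) (U : User h r) :
    decodeUser pts fileSymbols symbolBits n t1 t2 a b U
      (userPlace pts fileSymbols symbolBits n t1 t2 a b U w) d
      (fun j _ => relaySignal n t1 t2 a b j U
        (serverSignal pts fileSymbols symbolBits n t1 t2 a b j w d)
        (relayPlace pts fileSymbols symbolBits n t1 t2 a b j w) d) = w (d U) := by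
  rw [decodeUser, rsDecode_eq_of_eqOn pts U.2 (c := fileSymbols (w (d U))), Equiv.symm_apply_apply]
  intro j hj
  have ha : t1 * a + (n - t1) * a = n * a := by rw [← add_mul, Nat.add_sub_cancel' ht1]
  have hcache : Fintype.card ({j // j ∈ U.1} × Fin (D * (t1 * a + (n - 1).choose (t2 - 1) * b)))
      ≤ D * r * (t1 * a + (n - 1).choose (t2 - 1) * b) := by
    simp [U.2, mul_left_comm, mul_assoc]
  have hblock : Fintype.card (Fin D × (Fin (t1 * a) ⊕
      {T : Finset (Attached r j) // T.card = t2 ∧ ⟨U, hj⟩ ∈ T} × Fin b))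
      ≤ D * (t1 * a + (n - 1).choose (t2 - 1) * b) := by
    have := Fintype.card_finset_len_and_mem_le (⟨U, hj⟩ : Attached r j) t2
    rw [hL] at this
    simp only [Fintype.card_prod, Fintype.card_sum, Fintype.card_fin]
    gcongr
  have hserver : Fintype.card ({S : Finset (Attached r j) // S.card = t2 + 1} × Fin b)
      ≤ n.choose (t2 + 1) * b := by
    simp [hL]
  have hrelay : Fintype.card (Fin D × (Fin (t1 * a) ⊕ Fin ((n - t1) * a))) ≤ D * n * a := by
    simp [ha, mul_assoc]
  have hforward : Fintype.card
      (({S : Finset (Attached r j) // S.card = t2 + 1 ∧ ⟨U, hj⟩ ∈ S} × Fin b) ⊕ Fin ((n - t1) * a))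
      ≤ (n - 1).choose t2 * b + (n - t1) * a := by
    have := Fintype.card_finset_len_and_mem_le (⟨U, hj⟩ : Attached r j) (t2 + 1)
    rw [hL, Nat.add_sub_cancel] at this
    simp only [Fintype.card_prod, Fintype.card_sum, Fintype.card_fin]
    gcongr
  have hsymbol : m ≤ Fintype.card (RelayPosition r n t1 t2 a b j) := by
    simp [hL, ha, hm]
  simp only [dif_pos hj, userPlace, relaySignal, ofBits_toBits hcache, ofBits_toBits hserver,
    ofBits_toBits hrelay, ofBits_toBits hforward, serverSignal, relayPlace, Function.curry_uncurry,
    ofBits_toBits hblock, TwoHop.decode_userCache_relayMsg]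
  rw [localDemand, relaySymbols, toBits_ofBits hsymbol, Equiv.symm_apply_apply]

end CombinationNetwork

theorem stmt_0_general (h r : ℕ)
    (Khat : ℕ) (hKhat : Khat = Nat.choose (h - 1) (r - 1))
    (D : ℕ)
    (t1 t2 : ℕ) (ht1 : t1 ≤ Khat)
    (a b : ℕ)
    (hMDS : h ≤ 2 ^ (Khat * a + Nat.choose Khat t2 * b))
    (F : ℕ) (hF : F = r * (Khat * a + Nat.choose Khat t2 * b)) :
    ∃ (relayPlace : Fin h → (Fin D → (Fin F → Bool)) → (Fin (D * Khat * a) → Bool))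
      (userPlace : {U : Finset (Fin h) // U.card = r} →
        (Fin D → (Fin F → Bool)) →
        (Fin (D * r * (t1 * a + Nat.choose (Khat - 1) (t2 - 1) * b)) → Bool))
      (X : Fin h → (Fin D → (Fin F → Bool)) →
        ({U : Finset (Fin h) // U.card = r} → Fin D) →
        (Fin (Nat.choose Khat (t2 + 1) * b) → Bool))
      (Y : Fin h → {U : Finset (Fin h) // U.card = r} →
        (Fin (Nat.choose Khat (t2 + 1) * b) → Bool) →
        (Fin (D * Khat * a) → Bool) →
        ({U : Finset (Fin h) // U.card = r} → Fin D) →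
        (Fin (Nat.choose (Khat - 1) t2 * b + (Khat - t1) * a) → Bool))
      (dec : (U : {U : Finset (Fin h) // U.card = r}) →
        (Fin (D * r * (t1 * a + Nat.choose (Khat - 1) (t2 - 1) * b)) → Bool) →
        ({U : Finset (Fin h) // U.card = r} → Fin D) →
        ((j : Fin h) → j ∈ U.1 →
          (Fin (Nat.choose (Khat - 1) t2 * b + (Khat - t1) * a) → Bool)) →
        (Fin F → Bool)),
      ∀ (w : Fin D → (Fin F → Bool)) (d : {U : Finset (Fin h) // U.card = r} → Fin D)
        (U : {U : Finset (Fin h) // U.card = r}),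
        dec U (userPlace U w) d
          (fun j _ => Y j U (X j w d) (relayPlace j w) d) = w (d U) := by
  rcases Nat.eq_zero_or_pos F with rfl | hFpos
  · exact ⟨fun _ _ _ => false, fun _ _ _ => false, fun _ _ _ _ => false,
      fun _ _ _ _ _ _ => false, fun _ _ _ _ _ => false, fun _ _ _ => Subsingleton.elim _ _⟩
  set m := Khat * a + Khat.choose t2 * b
  have hr : 1 ≤ r := Nat.pos_of_mul_pos_right (hF ▸ hFpos)
  have hm : m ≠ 0 := (Nat.pos_of_mul_pos_left (hF ▸ hFpos)).ne'
  have : Fintype (GaloisField 2 m) := Fintype.ofFinite _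
  have hK : Fintype.card (GaloisField 2 m) = 2 ^ m := by
    rw [← Nat.card_eq_fintype_card, GaloisField.card 2 m hm]
  obtain ⟨pts⟩ : Nonempty (Fin h ↪ GaloisField 2 m) :=
    Function.Embedding.nonempty_of_card_le (by rwa [Fintype.card_fin, hK])
  obtain ⟨fileSymbols⟩ : Nonempty ((Fin F → Bool) ≃ (Fin r → GaloisField 2 m)) :=
    Fintype.card_eq.1 (by simp [hK, hF, ← pow_mul, mul_comm])
  obtain ⟨symbolBits⟩ : Nonempty (GaloisField 2 m ≃ (Fin m → Bool)) :=
    Fintype.card_eq.1 (by simp [hK])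
  exact ⟨CombinationNetwork.relayPlace pts fileSymbols symbolBits Khat t1 t2 a b,
    CombinationNetwork.userPlace pts fileSymbols symbolBits Khat t1 t2 a b,
    CombinationNetwork.serverSignal pts fileSymbols symbolBits Khat t1 t2 a b,
    CombinationNetwork.relaySignal Khat t1 t2 a b,
    CombinationNetwork.decodeUser pts fileSymbols symbolBits Khat t1 t2 a b,
    CombinationNetwork.decodeUser_userPlace pts fileSymbols symbolBits
      (fun j => hKhat ▸ CombinationNetwork.card_attached hr j) ht1 le_rfl⟩

/-- Theorem 1 of the paper: existence of a centralized coded caching scheme for a general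
combination network with caches at both the relays and the end users, with the stated
cache sizes and per-link signal lengths. Users are identified with `r`-element subsets of
the `h` relays; files are `F`-bit strings. -/
theorem stmt_0 (h r : ℕ) (hr : 1 ≤ r) (hrh : r < h)
    (Khat : ℕ) (hKhat : Khat = Nat.choose (h - 1) (r - 1))
    (D : ℕ) (hD : Nat.choose h r ≤ D)
    (t1 t2 : ℕ) (ht1 : t1 ≤ Khat) (ht2 : t2 ≤ Khat)
    (a b : ℕ)
    (hMDS : h ≤ 2 ^ (Khat * a + Nat.choose Khat t2 * b))
    (F : ℕ) (hF : F = r * (Khat * a + Nat.choose Khat t2 * b)) :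
    ∃ (relayPlace : Fin h → (Fin D → (Fin F → Bool)) → (Fin (D * Khat * a) → Bool))
      (userPlace : {U : Finset (Fin h) // U.card = r} →
        (Fin D → (Fin F → Bool)) →
        (Fin (D * r * (t1 * a + Nat.choose (Khat - 1) (t2 - 1) * b)) → Bool))
      (X : Fin h → (Fin D → (Fin F → Bool)) →
        ({U : Finset (Fin h) // U.card = r} → Fin D) →
        (Fin (Nat.choose Khat (t2 + 1) * b) → Bool))
      (Y : Fin h → {U : Finset (Fin h) // U.card = r} →
        (Fin (Nat.choose Khat (t2 + 1) * b) → Bool) →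
        (Fin (D * Khat * a) → Bool) →
        ({U : Finset (Fin h) // U.card = r} → Fin D) →
        (Fin (Nat.choose (Khat - 1) t2 * b + (Khat - t1) * a) → Bool))
      (dec : (U : {U : Finset (Fin h) // U.card = r}) →
        (Fin (D * r * (t1 * a + Nat.choose (Khat - 1) (t2 - 1) * b)) → Bool) →
        ({U : Finset (Fin h) // U.card = r} → Fin D) →
        ((j : Fin h) → j ∈ U.1 →
          (Fin (Nat.choose (Khat - 1) t2 * b + (Khat - t1) * a) → Bool)) →
        (Fin F → Bool)),
      ∀ (w : Fin D → (Fin F → Bool)) (d : {U : Finset (Fin h) // U.card = r} → Fin D)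
        (U : {U : Finset (Fin h) // U.card = r}),
        dec U (userPlace U w) d
          (fun j _ => Y j U (X j w d) (relayPlace j w) d) = w (d U) :=
  stmt_0_general h r Khat hKhat D t1 t2 ht1 a b hMDS F hF
end

section
/- Let D, F, l, s, q be positive integers with s·q ≤ D, and let 𝒳, 𝒞_R, 𝒞_U be finite sets. Suppose there are functions serverSig : ({0,1}^F)^D → 𝒳^(q·l) (server signals to l relays over q demand instances), relayCache : ({0,1}^F)^D → 𝒞_R^l, userCache : ({0,1}^F)^D → 𝒞_U^s, and a reconstruction function ρ such that for every file realization w ∈ ({0,1}^F)^D, ρ(serverSig(w), relayCache(w), userCache(w)) equals the tuple (w_1, …, w_{s·q}) of the first s·q files. Then 2^{s·q·F} ≤ |𝒳|^{q·l} · |𝒞_R|^l · |𝒞_U|^s. In particular, if |𝒳| = 2^{R1·F}, |𝒞_R| = 2^{N·F}, and |𝒞_U| = 2^{M·F} for nonnegative rationals R1, N, M with integer bit counts, then R1 ≥ (1/l)·(s − (s·M + l·N)/q). -/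
/-!
The first `s·q` files are a function of the triple (server signals, relay caches, user caches),
and since the remaining `D - s·q` files may be fixed arbitrarily, every value of those `s·q`
files is attained. The decoder is therefore onto the `2^{s·q·F}` file tuples, so the triple
takes at least that many values. Taking base-2 logarithms and dividing by `F·q·l` gives the
rate bound.
-/

open Function

theorem Fintype.card_pow_le_of_decodes_prefix {α β : Type*} [Fintype α] [Nonempty α]
    [Fintype β] {D n : ℕ} (hn : n ≤ D) (enc : (Fin D → α) → β) (dec : β → Fin n → α)
    (hdec : ∀ w, dec (enc w) = fun i => w (Fin.castLE hn i)) :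
    Fintype.card α ^ n ≤ Fintype.card β := by
  have hrestrict : Surjective (dec ∘ enc) := by
    simpa only [comp_def, hdec] using (Fin.castLE_injective hn).surjective_comp_right
  simpa only [Fintype.card_fun, Fintype.card_fin] using
    Fintype.card_le_of_surjective dec hrestrict.of_comp

theorem exponent_le_of_two_pow_le_mul_pow {n x y z a b c : ℕ}
    (h : 2 ^ n ≤ (2 ^ x) ^ a * (2 ^ y) ^ b * (2 ^ z) ^ c) :
    n ≤ x * a + y * b + z * c := by
  rwa [← pow_mul, ← pow_mul, ← pow_mul, ← pow_add, ← pow_add,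
    Nat.pow_le_pow_iff_right one_lt_two] at h

theorem rate_lower_bound {K : Type*} [Field K] [LinearOrder K] [IsStrictOrderedRing K]
    {R N M F l s q : K} (hF : 0 < F) (hl : 0 < l) (hq : 0 < q)
    (h : s * q * F ≤ R * F * (q * l) + N * F * l + M * F * s) :
    1 / l * (s - (s * M + l * N) / q) ≤ R := by
  have hperFile : s * q ≤ R * (q * l) + N * l + M * s := by
    refine le_of_mul_le_mul_right ?_ hF
    linear_combination h
  rw [one_div_mul_eq_div, div_le_iff₀ hl, sub_le_comm, le_div_iff₀ hq]
  linarith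

theorem stmt_2_general (D F l s q : ℕ) (hF : 0 < F) (hl : 0 < l)
    (hq : 0 < q) (hsq : s * q ≤ D)
    (X CR CU : Type*) [Fintype X] [Fintype CR] [Fintype CU]
    (serverSig : (Fin D → (Fin F → Bool)) → (Fin (q * l) → X))
    (relayCache : (Fin D → (Fin F → Bool)) → (Fin l → CR))
    (userCache : (Fin D → (Fin F → Bool)) → (Fin s → CU))
    (ρ : (Fin (q * l) → X) → (Fin l → CR) → (Fin s → CU) →
      (Fin (s * q) → (Fin F → Bool)))
    (hρ : ∀ w, ρ (serverSig w) (relayCache w) (userCache w) =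
      fun i => w (Fin.castLE hsq i)) :
    2 ^ (s * q * F) ≤
        Fintype.card X ^ (q * l) * Fintype.card CR ^ l * Fintype.card CU ^ s ∧
      ∀ (R1 N M : ℚ), 0 ≤ R1 → 0 ≤ N → 0 ≤ M →
        (∃ x : ℕ, (x : ℚ) = R1 * F ∧ Fintype.card X = 2 ^ x) →
        (∃ y : ℕ, (y : ℚ) = N * F ∧ Fintype.card CR = 2 ^ y) →
        (∃ z : ℕ, (z : ℚ) = M * F ∧ Fintype.card CU = 2 ^ z) →
        R1 ≥ (1 / (l : ℚ)) * ((s : ℚ) - ((s : ℚ) * M + (l : ℚ) * N) / (q : ℚ)) := by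
  have hcount : 2 ^ (s * q * F) ≤
      Fintype.card X ^ (q * l) * Fintype.card CR ^ l * Fintype.card CU ^ s := by
    have := Fintype.card_pow_le_of_decodes_prefix hsq
      (fun w => (serverSig w, relayCache w, userCache w)) (fun t => ρ t.1 t.2.1 t.2.2) hρ
    simp only [Fintype.card_prod, Fintype.card_fun, Fintype.card_fin, Fintype.card_bool] at this
    rwa [mul_comm _ F, pow_mul, mul_assoc]
  refine ⟨hcount, ?_⟩
  rintro R1 N M - - - ⟨x, hx, hX⟩ ⟨y, hy, hY⟩ ⟨z, hz, hZ⟩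
  have hbits := exponent_le_of_two_pow_le_mul_pow (hX ▸ hY ▸ hZ ▸ hcount)
  have hbitsQ : (s * q * F : ℚ) ≤ x * (q * l) + y * l + z * s := by exact_mod_cast hbits
  rw [hx, hy, hz] at hbitsQ
  exact rate_lower_bound (by exact_mod_cast hF) (by exact_mod_cast hl) (by exact_mod_cast hq)
    hbitsQ

/-- Genie-aided cut-set lower bound on the first-hop rate (Theorem 2, first part) in
deterministic-code form: if the first `s·q` files can be reconstructed from the server
signals to `l` relays over `q` demand instances, the `l` relay caches and the `s` user
caches, then a counting bound holds, and consequently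
`R1 ≥ (1/l)·(s − (s·M + l·N)/q)` for the corresponding normalized rates. -/
theorem stmt_2 (D F l s q : ℕ) (hD : 0 < D) (hF : 0 < F) (hl : 0 < l) (hs : 0 < s)
    (hq : 0 < q) (hsq : s * q ≤ D)
    (X CR CU : Type*) [Fintype X] [Fintype CR] [Fintype CU]
    (serverSig : (Fin D → (Fin F → Bool)) → (Fin (q * l) → X))
    (relayCache : (Fin D → (Fin F → Bool)) → (Fin l → CR))
    (userCache : (Fin D → (Fin F → Bool)) → (Fin s → CU))
    (ρ : (Fin (q * l) → X) → (Fin l → CR) → (Fin s → CU) →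
      (Fin (s * q) → (Fin F → Bool)))
    (hρ : ∀ w, ρ (serverSig w) (relayCache w) (userCache w) =
      fun i => w (Fin.castLE hsq i)) :
    2 ^ (s * q * F) ≤
        Fintype.card X ^ (q * l) * Fintype.card CR ^ l * Fintype.card CU ^ s ∧
      ∀ (R1 N M : ℚ), 0 ≤ R1 → 0 ≤ N → 0 ≤ M →
        (∃ x : ℕ, (x : ℚ) = R1 * F ∧ Fintype.card X = 2 ^ x) →
        (∃ y : ℕ, (y : ℚ) = N * F ∧ Fintype.card CR = 2 ^ y) →
        (∃ z : ℕ, (z : ℚ) = M * F ∧ Fintype.card CU = 2 ^ z) →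
        R1 ≥ (1 / (l : ℚ)) * ((s : ℚ) - ((s : ℚ) * M + (l : ℚ) * N) / (q : ℚ)) :=
  stmt_2_general D F l s q hF hl hq hsq X CR CU serverSig relayCache userCache ρ hρ
end

section
/- Let D, F, r be positive integers and let 𝒞_U, 𝒴 be finite sets. Suppose there are functions userCache : ({0,1}^F)^D → 𝒞_U and Y : ({0,1}^F)^D → 𝒴^(r·D) (the r relay-to-user signals received in each of D demand instances), and a reconstruction function ρ such that for every file realization w ∈ ({0,1}^F)^D, ρ(userCache(w), Y(w)) = w. Then 2^{D·F} ≤ |𝒞_U| · |𝒴|^{r·D}. In particular, if |𝒞_U| = 2^{M·F} and |𝒴| = 2^{R2·F} for nonnegative rationals M, R2 with integer bit counts, then R2 ≥ (1/r)·(1 − M/D). -/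
/-! A user that decodes every file realization from its cache and its received signals makes
`w ↦ (userCache w, sig w)` injective, so the `2^(D·F)` realizations are at most as many as the
`|𝒞_U| · |𝒴|^(r·D)` cache/signal pairs. Taking `log₂` gives `D·F ≤ M·F + R2·F·r·D`, and dividing
by `F·D` yields the rate bound. -/

theorem Fintype.card_le_card_mul_card_of_decode {α β γ : Type*} [Fintype α] [Fintype β]
    [Fintype γ] (f : α → β) (g : α → γ) (dec : β → γ → α) (hdec : ∀ a, dec (f a) (g a) = a) :
    Fintype.card α ≤ Fintype.card β * Fintype.card γ := by
  rw [← Fintype.card_prod]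
  exact Fintype.card_le_of_injective (fun a => (f a, g a))
    (Function.LeftInverse.injective (g := fun p : β × γ => dec p.1 p.2) hdec)

theorem inv_mul_one_sub_div_le_of_mul_le {K : Type*} [Field K] [LinearOrder K]
    [IsStrictOrderedRing K] {D F r M R : K} (hD : 0 < D) (hF : 0 < F) (hr : 0 ≤ r) (hR : 0 ≤ R)
    (h : D * F ≤ M * F + R * F * (r * D)) :
    1 / r * (1 - M / D) ≤ R := by
  have hD_le : D ≤ M + r * R * D :=
    le_of_mul_le_mul_right (by linarith) hF
  have h_sub : 1 - M / D ≤ R * r := by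
    rw [one_sub_div hD.ne', div_le_iff₀ hD]
    linarith
  rw [one_div_mul_eq_div]
  exact div_le_of_le_mul₀ hr hR h_sub

theorem stmt_3_general (D F r : ℕ) (hD : 0 < D) (hF : 0 < F)
    (CU Y : Type*) [Fintype CU] [Fintype Y]
    (userCache : (Fin D → (Fin F → Bool)) → CU)
    (sig : (Fin D → (Fin F → Bool)) → (Fin (r * D) → Y))
    (ρ : CU → (Fin (r * D) → Y) → (Fin D → (Fin F → Bool)))
    (hρ : ∀ w, ρ (userCache w) (sig w) = w) :
    2 ^ (D * F) ≤ Fintype.card CU * Fintype.card Y ^ (r * D) ∧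
      ∀ (M R2 : ℚ), 0 ≤ M → 0 ≤ R2 →
        (∃ z : ℕ, (z : ℚ) = M * F ∧ Fintype.card CU = 2 ^ z) →
        (∃ y : ℕ, (y : ℚ) = R2 * F ∧ Fintype.card Y = 2 ^ y) →
        R2 ≥ (1 / (r : ℚ)) * (1 - M / (D : ℚ)) := by
  have hcount : 2 ^ (D * F) ≤ Fintype.card CU * Fintype.card Y ^ (r * D) := by
    simpa [Fintype.card_fun, mul_comm D F, pow_mul] using
      Fintype.card_le_card_mul_card_of_decode userCache sig ρ hρ
  refine ⟨hcount, ?_⟩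
  rintro M R2 - hR2 ⟨z, hz, hCU⟩ ⟨y, hy, hY⟩
  rw [hCU, hY, ← pow_mul, ← pow_add] at hcount
  have hbits : D * F ≤ z + y * (r * D) := (Nat.pow_le_pow_iff_right one_lt_two).mp hcount
  refine inv_mul_one_sub_div_le_of_mul_le (Nat.cast_pos.mpr hD) (Nat.cast_pos.mpr hF)
    r.cast_nonneg hR2 ?_
  rw [← hz, ← hy]
  exact_mod_cast hbits

/-- Cut-set lower bound on the second-hop (relay-to-user) rate (Theorem 2, second part)
in deterministic-code form: if a single user can reconstruct all `D` files from its cache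
and the `r·D` relay-to-user signals received over `D` demand instances, then a counting
bound holds, and consequently `R2 ≥ (1/r)·(1 − M/D)`. -/
theorem stmt_3 (D F r : ℕ) (hD : 0 < D) (hF : 0 < F) (hr : 0 < r)
    (CU Y : Type*) [Fintype CU] [Fintype Y]
    (userCache : (Fin D → (Fin F → Bool)) → CU)
    (sig : (Fin D → (Fin F → Bool)) → (Fin (r * D) → Y))
    (ρ : CU → (Fin (r * D) → Y) → (Fin D → (Fin F → Bool)))
    (hρ : ∀ w, ρ (userCache w) (sig w) = w) :
    2 ^ (D * F) ≤ Fintype.card CU * Fintype.card Y ^ (r * D) ∧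
      ∀ (M R2 : ℚ), 0 ≤ M → 0 ≤ R2 →
        (∃ z : ℕ, (z : ℚ) = M * F ∧ Fintype.card CU = 2 ^ z) →
        (∃ y : ℕ, (y : ℚ) = R2 * F ∧ Fintype.card Y = 2 ^ y) →
        R2 ≥ (1 / (r : ℚ)) * (1 - M / (D : ℚ)) :=
  stmt_3_general D F r hD hF CU Y userCache sig ρ hρ
end

section
/- Let G be an additive commutative group, let K̂ ≥ 1 and 0 ≤ t ≤ K̂ − 1 be integers, let D be a positive integer, let p be a function assigning an element p(n, T) of G to every file index n ∈ {1,…,D} and every t-element subset T of {1,…,K̂} (the 'pieces' or 'shares'), and let d : {1,…,K̂} → {1,…,D} be a demand assignment. For every (t+1)-element subset S of {1,…,K̂} define the multicast signal X_S = Σ_{i ∈ S} p(d(i), S \ {i}). Then for every k ∈ {1,…,K̂} and every t-element subset T of {1,…,K̂} with k ∉ T, one has p(d(k), T) = X_{T ∪ {k}} − Σ_{i ∈ T} p(d(i), (T ∪ {k}) \ {i}), and moreover every subtracted term p(d(i), (T ∪ {k}) \ {i}) with i ∈ T has k ∈ (T ∪ {k}) \ {i}. Consequently, a user k whose cache contains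 exactly the pieces {p(n, T') : n ∈ {1,…,D}, T' a t-subset with k ∈ T'} can compute every piece p(d(k), T) of its demanded file from its cache together with the signals {X_S : k ∈ S, |S| = t+1}. -/
/-!
A user `k` missing the piece `p (d k) T` (so `k ∉ T`) looks at the signal `X_{T ∪ {k}}`.
Its summand for `i = k` is the wanted piece; every other summand is indexed by
`(T ∪ {k}) \ {i}`, a `t`-set containing `k`, hence is cached and can be subtracted.
Pieces with `k ∈ T` are cached outright.
-/

namespace CodedCaching

open Finset

variable {α ι G : Type*} [DecidableEq α] [AddCommGroup G]

/-- The multicast signal `X_S = ∑_{i ∈ S} f i (S \ {i})`, with `f i = p (d i)`. -/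
def signal (f : α → Finset α → G) (S : Finset α) : G :=
  ∑ i ∈ S, f i (S \ {i})

theorem mem_insert_sdiff_singleton {k i : α} {T : Finset α} (hk : k ∉ T) (hi : i ∈ T) :
    k ∈ insert k T \ {i} :=
  mem_sdiff.2 ⟨mem_insert_self k T, fun h => hk (mem_singleton.1 h ▸ hi)⟩

theorem card_insert_sdiff_singleton {k i : α} {T : Finset α} (hk : k ∉ T) (hi : i ∈ T) :
    #(insert k T \ {i}) = #T := by
  rw [sdiff_singleton_eq_erase, card_erase_of_mem (mem_insert_of_mem hi),
    card_insert_of_notMem hk, Nat.add_sub_cancel]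

theorem signal_insert_sub {k : α} {T : Finset α} (hk : k ∉ T) (f : α → Finset α → G) :
    signal f (insert k T) - ∑ i ∈ T, f i (insert k T \ {i}) = f k T := by
  rw [signal, sum_insert hk, sdiff_singleton_eq_erase k, erase_insert hk, add_sub_cancel_right]

variable (d : α → ι) (t : ℕ) (k : α)

def cachedIndex {T : Finset α} (hT : #T = t) (hk : k ∉ T) (i : T) :
    {T' : Finset α // #T' = t ∧ k ∈ T'} :=
  ⟨insert k T \ {i.1}, (card_insert_sdiff_singleton hk i.2).trans hT,
    mem_insert_sdiff_singleton hk i.2⟩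

def signalIndex {T : Finset α} (hT : #T = t) (hk : k ∉ T) :
    {S : Finset α // #S = t + 1 ∧ k ∈ S} :=
  ⟨insert k T, by rw [card_insert_of_notMem hk, hT], mem_insert_self k T⟩

def decode (c : ι → {T' : Finset α // #T' = t ∧ k ∈ T'} → G)
    (X : {S : Finset α // #S = t + 1 ∧ k ∈ S} → G) (T : {T : Finset α // #T = t}) : G :=
  if hk : k ∈ T.1 then c (d k) ⟨T.1, T.2, hk⟩
  else X (signalIndex t k T.2 hk) - ∑ i ∈ T.1.attach, c (d i) (cachedIndex t k T.2 hk i)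

theorem decode_eq (q : ι → Finset α → G) (T : {T : Finset α // #T = t}) :
    decode d t k (fun n T' => q n T'.1) (fun S => signal (fun i => q (d i)) S.1) T =
      q (d k) T.1 := by
  unfold decode
  split_ifs with hk
  · rfl
  · dsimp only [signalIndex, cachedIndex]
    rw [sum_attach T.1 fun i => q (d i) (insert k T.1 \ {i})]
    exact signal_insert_sub hk _

end CodedCaching

open CodedCaching in
theorem stmt_4_general {G : Type*} [AddCommGroup G] (Khat t D : ℕ)
    (p : Fin D → Finset (Fin Khat) → G) (d : Fin Khat → Fin D) :
    (∀ (k : Fin Khat) (T : Finset (Fin Khat)), T.card = t → k ∉ T →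
      (p (d k) T =
        (∑ i ∈ insert k T, p (d i) (insert k T \ {i})) -
          ∑ i ∈ T, p (d i) (insert k T \ {i})) ∧
      ∀ i ∈ T, k ∈ insert k T \ {i}) ∧
    ∀ k : Fin Khat,
      ∃ g : (Fin D → {T' : Finset (Fin Khat) // T'.card = t ∧ k ∈ T'} → G) →
          ({S : Finset (Fin Khat) // S.card = t + 1 ∧ k ∈ S} → G) →
          ({T : Finset (Fin Khat) // T.card = t} → G),
        ∀ q : Fin D → Finset (Fin Khat) → G,
          g (fun n T' => q n T'.1) (fun S => ∑ i ∈ S.1, q (d i) (S.1 \ {i})) =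
            fun T => q (d k) T.1 :=
  ⟨fun _ _ _ hk =>
      ⟨(signal_insert_sub hk fun i => p (d i)).symm, fun _ => mem_insert_sdiff_singleton hk⟩,
    fun k => ⟨decode d t k, fun q => funext (decode_eq d t k q)⟩⟩

/-- Correctness lemma for the coded delivery procedure: with pieces `p n T` indexed by
`t`-subsets `T` of `{1,…,K̂}` and multicast signals `X_S = ∑_{i∈S} p (d i) (S \ {i})`
over `(t+1)`-subsets `S`, every user `k` recovers each missing piece `p (d k) T`
(`k ∉ T`) from the signal `X_{T∪{k}}` by subtracting pieces whose index set contains `k`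
(hence cached). Consequently user `k` can compute all pieces of its demanded file from
its cache and the signals `{X_S : k ∈ S}`. -/
theorem stmt_4 {G : Type*} [AddCommGroup G] (Khat t D : ℕ)
    (hK : 1 ≤ Khat) (ht : t ≤ Khat - 1) (hD : 0 < D)
    (p : Fin D → Finset (Fin Khat) → G) (d : Fin Khat → Fin D) :
    (∀ (k : Fin Khat) (T : Finset (Fin Khat)), T.card = t → k ∉ T →
      (p (d k) T =
        (∑ i ∈ insert k T, p (d i) (insert k T \ {i})) -
          ∑ i ∈ T, p (d i) (insert k T \ {i})) ∧
      ∀ i ∈ T, k ∈ insert k T \ {i}) ∧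
    ∀ k : Fin Khat,
      ∃ g : (Fin D → {T' : Finset (Fin Khat) // T'.card = t ∧ k ∈ T'} → G) →
          ({S : Finset (Fin Khat) // S.card = t + 1 ∧ k ∈ S} → G) →
          ({T : Finset (Fin Khat) // T.card = t} → G),
        ∀ q : Fin D → Finset (Fin Khat) → G,
          g (fun n T' => q n T'.1) (fun S => ∑ i ∈ S.1, q (d i) (S.1 \ {i})) =
            fun T => q (d k) T.1 :=
  stmt_4_general Khat t D p d
end

section
/- Let K̂ ≥ 1 and t1, t2 be natural numbers with t1 ≤ K̂ and t2 ≤ K̂, and let D > 0, r > 0, N ≥ 0 be real numbers. Set M = (t1 − t2)·N·r/K̂ + t2·D/K̂. Then (C(K̂−1, t2)/C(K̂, t2))·(1/r − N/D) + (1 − t1/K̂)·(N/D) = (1/r)·(1 − M/D). In particular, the second-hop (relay-to-user) rate of the scheme of Theorem 1 equals (1/r)(1 − M/D), depending only on the user-cache size M. -/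
/-!
Since `C(K̂-1, t₂) / C(K̂, t₂) = 1 - t₂/K̂` (the fraction of `t₂`-subsets of the `K̂` users that
avoid a given user), the identity becomes an identity of rational functions in `N, r, D, K̂`.
-/

theorem Nat.cast_choose_div_cast_choose_succ {K : Type*} [Field K] [CharZero K] {n k : ℕ}
    (hk : k ≤ n + 1) :
    (n.choose k : K) / ((n + 1).choose k : K) = ((n + 1 : ℕ) - k : K) / (n + 1 : ℕ) := by
  have hchoose : (n + 1).choose k ≠ 0 := (Nat.choose_pos hk).ne'
  rw [div_eq_div_iff (by exact_mod_cast hchoose) (Nat.cast_ne_zero.2 n.succ_ne_zero),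
    ← Nat.cast_sub hk]
  exact_mod_cast (Nat.choose_mul_succ_eq n k).trans (mul_comm _ _)

theorem stmt_7_general (Khat t1 t2 : ℕ) (hK : 1 ≤ Khat) (ht2 : t2 ≤ Khat)
    (D r N : ℝ) (hD : 0 < D) (hr : 0 < r)
    (M : ℝ)
    (hM : M = ((t1 : ℝ) - (t2 : ℝ)) * N * r / (Khat : ℝ) + (t2 : ℝ) * D / (Khat : ℝ)) :
    ((Nat.choose (Khat - 1) t2 : ℝ) / (Nat.choose Khat t2 : ℝ)) * (1 / r - N / D) +
      (1 - (t1 : ℝ) / (Khat : ℝ)) * (N / D) = (1 / r) * (1 - M / D) := by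
  obtain ⟨n, rfl⟩ := Nat.exists_eq_add_of_le' hK
  rw [Nat.add_sub_cancel, Nat.cast_choose_div_cast_choose_succ ht2, hM]
  field_simp
  ring

/-- Second-hop rate verification for the scheme of Theorem 1 (equation (14)): the
per-user relay transmission equals `(1/r)(1 − M/D)` where
`M = (t1 − t2)·N·r/K̂ + t2·D/K̂`. -/
theorem stmt_7 (Khat t1 t2 : ℕ) (hK : 1 ≤ Khat) (ht1 : t1 ≤ Khat) (ht2 : t2 ≤ Khat)
    (D r N : ℝ) (hD : 0 < D) (hr : 0 < r) (hN : 0 ≤ N)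
    (M : ℝ)
    (hM : M = ((t1 : ℝ) - (t2 : ℝ)) * N * r / (Khat : ℝ) + (t2 : ℝ) * D / (Khat : ℝ)) :
    ((Nat.choose (Khat - 1) t2 : ℝ) / (Nat.choose Khat t2 : ℝ)) * (1 / r - N / D) +
      (1 - (t1 : ℝ) / (Khat : ℝ)) * (N / D) = (1 / r) * (1 - M / D) :=
  stmt_7_general Khat t1 t2 hK ht2 D r N hD hr M hM
end
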